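/- For k, n ∈ ℤ, let I(k,n) = ∫_{4k−1}^{4k+1} ∫_{4n+1}^{4n+3} (u² + v²)^{−3/2} du dv. Then Σ_{n∈ℤ} I(0,n) = 4 · Σ_{m=0}^∞ (−1)^m · ( sqrt(1 + 1/(2m+1)²) − 1 ). -/

import Mathlib

/-!
By Fubini and the antiderivatives `u / (v² √(u² + v²))` in `u` and `-√(1 + v²) / v` in `v`,
`I(0,n) = 2 (g(4n+1) - g(4n+3))` with `g(t) = √(1 + t²) / t`. Since `g` is odd,
`I(0,-n-1) = I(0,n)`; since `g(t) = √(1 + 1/t²)` for `t > 0`, each `I(0,m)` with `m ≥ 0` is twice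
the sum of the terms `2m` and `2m+1` of the alternating series, which converges absolutely because
its terms are `O(1/m²)`.
-/

open Real MeasureTheory

/-- `I(k,n)` is the integral of `(u² + v²)^{-3/2}` over the square
`[4k-1, 4k+1] × [4n+1, 4n+3]`. -/
noncomputable def Ikn (k n : ℤ) : ℝ :=
  ∫ p in Set.Icc ((4 : ℝ) * k - 1) (4 * k + 1) ×ˢ Set.Icc ((4 : ℝ) * n + 1) (4 * n + 3),
    ((p.1 ^ 2 + p.2 ^ 2) ^ (-(3 / 2 : ℝ)) : ℝ) ∂(volume : Measure (ℝ × ℝ))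

lemma rpow_neg_three_halves {x : ℝ} (hx : 0 < x) : x ^ (-(3 / 2 : ℝ)) = 1 / (x * √x) := by
  rw [rpow_neg hx.le, sqrt_eq_rpow, ← rpow_one_add' hx.le (by norm_num), one_div]
  norm_num

lemma hasDerivAt_div_mul_sqrt_sq_add_sq {v : ℝ} (hv : v ≠ 0) (u : ℝ) :
    HasDerivAt (fun u : ℝ => u / (v ^ 2 * √(u ^ 2 + v ^ 2)))
      ((u ^ 2 + v ^ 2) ^ (-(3 / 2 : ℝ))) u := by
  have hx : 0 < u ^ 2 + v ^ 2 := by positivity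
  have hsqrt : HasDerivAt (fun u : ℝ => √(u ^ 2 + v ^ 2)) (u / √(u ^ 2 + v ^ 2)) u := by
    convert (((hasDerivAt_pow 2 u).add_const (v ^ 2)).sqrt hx.ne') using 1
    field_simp
    ring
  refine ((hasDerivAt_id u).div (hsqrt.const_mul (v ^ 2)) (by positivity)).congr_deriv ?_
  rw [rpow_neg_three_halves hx, id]
  field_simp
  rw [sq_sqrt hx.le]
  ring

lemma integral_sq_add_sq_rpow_neg_three_halves {v : ℝ} (hv : v ≠ 0) (a b : ℝ) :
    ∫ u in a..b, (u ^ 2 + v ^ 2) ^ (-(3 / 2 : ℝ))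
      = b / (v ^ 2 * √(b ^ 2 + v ^ 2)) - a / (v ^ 2 * √(a ^ 2 + v ^ 2)) := by
  refine intervalIntegral.integral_eq_sub_of_hasDerivAt
    (fun u _ => hasDerivAt_div_mul_sqrt_sq_add_sq hv u) (ContinuousOn.intervalIntegrable ?_)
  have hv2 : 0 < v ^ 2 := by positivity
  exact (continuous_id.pow 2).add continuous_const |>.continuousOn.rpow_const
    fun u _ => Or.inl (add_pos_of_nonneg_of_pos (sq_nonneg u) hv2).ne'

lemma hasDerivAt_neg_sqrt_one_add_sq_div {v : ℝ} (hv : v ≠ 0) :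
    HasDerivAt (fun v : ℝ => -(√(1 + v ^ 2) / v)) (1 / (v ^ 2 * √(1 + v ^ 2))) v := by
  have hx : 0 < 1 + v ^ 2 := by positivity
  refine ((((hasDerivAt_pow 2 v).const_add 1).sqrt hx.ne').div (hasDerivAt_id v) hv).neg
    |>.congr_deriv ?_
  rw [id]
  field_simp
  rw [sq_sqrt hx.le]
  ring

lemma integral_one_div_sq_mul_sqrt_one_add_sq {a b : ℝ} (h : (0 : ℝ) ∉ Set.uIcc a b) :
    ∫ v in a..b, 1 / (v ^ 2 * √(1 + v ^ 2)) = √(1 + a ^ 2) / a - √(1 + b ^ 2) / b := by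
  have hne : ∀ v ∈ Set.uIcc a b, v ≠ 0 := fun v hv h0 => h (h0 ▸ hv)
  rw [intervalIntegral.integral_eq_sub_of_hasDerivAt
    (fun v hv => hasDerivAt_neg_sqrt_one_add_sq_div (hne v hv))
    (ContinuousOn.intervalIntegrable fun v hv => ?_)]
  · ring
  have := hne v hv
  exact ContinuousAt.continuousWithinAt (by fun_prop (disch := positivity))

lemma ne_zero_of_mem_Icc_four_mul_add_one {n : ℤ} {v : ℝ}
    (hv : v ∈ Set.Icc (4 * (n : ℝ) + 1) (4 * n + 3)) : v ≠ 0 := by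
  rintro rfl
  have h1 : (4 * n + 1 : ℤ) ≤ 0 := by exact_mod_cast hv.1
  have h3 : (0 : ℤ) ≤ 4 * n + 3 := by exact_mod_cast hv.2
  omega

lemma Ikn_eq_intervalIntegral (k n : ℤ) :
    Ikn k n = ∫ v in (4 * (n : ℝ) + 1)..(4 * n + 3),
      ∫ u in (4 * (k : ℝ) - 1)..(4 * k + 1), (u ^ 2 + v ^ 2) ^ (-(3 / 2 : ℝ)) := by
  have hint : IntegrableOn (fun p : ℝ × ℝ => (p.1 ^ 2 + p.2 ^ 2) ^ (-(3 / 2 : ℝ)))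
      (Set.Icc (4 * (k : ℝ) - 1) (4 * k + 1) ×ˢ Set.Icc (4 * (n : ℝ) + 1) (4 * n + 3)) := by
    refine ContinuousOn.integrableOn_compact (isCompact_Icc.prod isCompact_Icc) ?_
    refine ((continuous_fst.pow 2).add (continuous_snd.pow 2)).continuousOn.rpow_const
      fun ⟨u, v⟩ hp => Or.inl ?_
    have hv : v ≠ 0 := ne_zero_of_mem_Icc_four_mul_add_one hp.2
    show u ^ 2 + v ^ 2 ≠ 0
    positivity
  rw [Ikn, Measure.volume_eq_prod, ← Measure.prod_restrict,
    integral_prod_symm _ (by rwa [Measure.prod_restrict, ← Measure.volume_eq_prod]),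
    intervalIntegral.integral_of_le (by linarith), ← integral_Icc_eq_integral_Ioc]
  refine setIntegral_congr_fun measurableSet_Icc fun v _ => ?_
  rw [intervalIntegral.integral_of_le (by linarith), ← integral_Icc_eq_integral_Ioc]

lemma Ikn_zero (n : ℤ) :
    Ikn 0 n =
      2 * (√(1 + (4 * n + 1) ^ 2) / (4 * n + 1) - √(1 + (4 * n + 3) ^ 2) / (4 * n + 3)) := by
  have hne : (0 : ℝ) ∉ Set.uIcc (4 * (n : ℝ) + 1) (4 * n + 3) := by
    rw [Set.uIcc_of_le (by linarith)]
    exact fun h => ne_zero_of_mem_Icc_four_mul_add_one h rfl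
  rw [Ikn_eq_intervalIntegral, ← integral_one_div_sq_mul_sqrt_one_add_sq hne,
    ← intervalIntegral.integral_const_mul]
  refine intervalIntegral.integral_congr fun v hv => ?_
  have hv : v ≠ 0 := fun h => hne (h ▸ hv)
  simp only [Int.cast_zero, mul_zero, zero_sub, integral_sq_add_sq_rpow_neg_three_halves hv]
  ring_nf

lemma sqrt_one_add_sq_div_of_pos {t : ℝ} (ht : 0 < t) :
    √(1 + t ^ 2) / t = √(1 + 1 / t ^ 2) := by
  rw [show 1 + 1 / t ^ 2 = (1 + t ^ 2) / t ^ 2 by field_simp; ring, sqrt_div' _ (by positivity),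
    sqrt_sq ht.le]

lemma Ikn_zero_neg_sub_one (n : ℤ) : Ikn 0 (-(n + 1)) = Ikn 0 n := by
  have h1 : 4 * ((-(n + 1) : ℤ) : ℝ) + 1 = -(4 * n + 3) := by push_cast; ring
  have h3 : 4 * ((-(n + 1) : ℤ) : ℝ) + 3 = -(4 * n + 1) := by push_cast; ring
  rw [Ikn_zero, Ikn_zero, h1, h3, neg_sq, neg_sq, div_neg, div_neg]
  ring

noncomputable def seriesTerm (m : ℕ) : ℝ := √(1 + 1 / (2 * m + 1 : ℝ) ^ 2) - 1

lemma Ikn_zero_natCast (m : ℕ) : Ikn 0 m = 2 * (seriesTerm (2 * m) - seriesTerm (2 * m + 1)) := by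
  rw [Ikn_zero, Int.cast_natCast, sqrt_one_add_sq_div_of_pos (by positivity),
    sqrt_one_add_sq_div_of_pos (by positivity), seriesTerm, seriesTerm]
  push_cast
  ring_nf

lemma summable_seriesTerm : Summable seriesTerm := by
  have hp : Summable fun m : ℕ => 1 / ((m + 1 : ℕ) : ℝ) ^ 2 :=
    (summable_nat_add_iff 1).mpr (summable_one_div_nat_pow.mpr one_lt_two)
  refine hp.of_nonneg_of_le (fun m => ?_) (fun m => ?_)
  · rw [seriesTerm, sub_nonneg, one_le_sqrt]
    linarith [show 0 ≤ 1 / (2 * m + 1 : ℝ) ^ 2 by positivity]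
  · have hx : 1 ≤ 1 + 1 / (2 * m + 1 : ℝ) ^ 2 := by
      linarith [show 0 ≤ 1 / (2 * m + 1 : ℝ) ^ 2 by positivity]
    calc seriesTerm m ≤ 1 + 1 / (2 * m + 1 : ℝ) ^ 2 - 1 :=
          sub_le_sub_right (sqrt_le_self_iff.mpr (Or.inr hx)) 1
      _ ≤ 1 / ((m + 1 : ℕ) : ℝ) ^ 2 := by
          rw [add_sub_cancel_left]
          gcongr
          push_cast
          linarith [(m.cast_nonneg : (0 : ℝ) ≤ m)]

lemma Summable.hasSum_even_sub_odd {f : ℕ → ℝ} (hf : Summable f) :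
    HasSum (fun m => f (2 * m) - f (2 * m + 1)) (∑' m, (-1) ^ m * f m) := by
  set g : ℕ → ℝ := fun m => (-1) ^ m * f m
  have hg : Summable g := hf.abs.of_norm_bounded fun m => by simp [g]
  have he : Summable fun m => g (2 * m) :=
    hg.comp_injective (mul_right_injective₀ (two_ne_zero' ℕ))
  have ho : Summable fun m => g (2 * m + 1) :=
    hg.comp_injective ((add_left_injective 1).comp (mul_right_injective₀ (two_ne_zero' ℕ)))
  rw [← tsum_even_add_odd he ho]
  refine (he.hasSum.add ho.hasSum).congr_fun fun m => ?_
  simp [g, pow_succ, pow_mul, sub_eq_add_neg]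

/-- `Σ_{n ∈ ℤ} I(0,n) = 4 Σ_{m≥0} (-1)^m (√(1 + 1/(2m+1)²) - 1)`. -/
theorem tsum_Ikn_zero_eq :
    ∑' n : ℤ, Ikn 0 n
      = 4 * ∑' m : ℕ, (-1 : ℝ) ^ m *
          (Real.sqrt (1 + 1 / ((2 * m + 1 : ℝ)) ^ 2) - 1) := by
  have hnat : HasSum (fun m : ℕ => Ikn 0 m) (2 * ∑' m, (-1) ^ m * seriesTerm m) := by
    simpa only [Ikn_zero_natCast] using summable_seriesTerm.hasSum_even_sub_odd.mul_left 2
  have hneg : HasSum (fun m : ℕ => Ikn 0 (-(m + 1))) (2 * ∑' m, (-1) ^ m * seriesTerm m) := by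
    simpa only [Ikn_zero_neg_sub_one] using hnat
  rw [(hnat.of_nat_of_neg_add_one hneg).tsum_eq]
  unfold seriesTerm
  ring
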